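/- The Bhattacharyya kernel k_B(K,L) = det(K)^{1/2} det(L)^{1/2} det((K+L)/2)^{-1} equals 1 if and only if K = L, for symmetric positive definite matrices K and L. -/

import Mathlib

/-!
Write `K = Bᵀ B` with `B` invertible and `L = Bᵀ M B`. Both `det ((K + L) / 2)` and
`√(det K) √(det L)` are `(det B)²` times the corresponding quantity for the pair `(1, M)`.
For that pair, in terms of the eigenvalues `λᵢ > 0` of `M`, the equation reads
`∏ (1 + λᵢ) / 2 = ∏ √λᵢ`; since `√λ ≤ (1 + λ) / 2` with equality only at `λ = 1` (AM–GM),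
it holds exactly when every `λᵢ = 1`, i.e. `M = 1`.
-/

open Matrix

noncomputable def bhattacharyya {n : ℕ} (K L : Matrix (Fin n) (Fin n) ℝ) : ℝ :=
  Real.sqrt K.det * Real.sqrt L.det * (((K + L) / 2).det)⁻¹

theorem Matrix.div_two_eq_smul {n K : Type*} [Fintype n] [DecidableEq n] [Field K]
    [NeZero (2 : K)] (A : Matrix n n K) : A / 2 = (2⁻¹ : K) • A := by
  rw [div_eq_mul_inv, inv_eq_right_inv (B := (2⁻¹ : K) • 1)]
  · simp
  · rw [mul_smul_comm, mul_one, Algebra.smul_def, ← map_ofNat (algebraMap K (Matrix n n K)) 2,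
      ← map_mul, inv_mul_cancel₀ two_ne_zero, map_one]

theorem Finset.prod_eq_prod_iff_of_le_of_pos {ι R : Type*} [CommSemiring R] [PartialOrder R]
    [IsStrictOrderedRing R] {s : Finset ι} {f g : ι → R} (hf : ∀ i ∈ s, 0 < f i)
    (hfg : ∀ i ∈ s, f i ≤ g i) : ∏ i ∈ s, f i = ∏ i ∈ s, g i ↔ ∀ i ∈ s, f i = g i := by
  refine ⟨fun h => ?_, Finset.prod_congr rfl⟩
  by_contra! hne
  obtain ⟨i, hi, hfgi⟩ := hne
  exact (Finset.prod_lt_prod hf hfg ⟨i, hi, (hfg i hi).lt_of_ne hfgi⟩).ne h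

theorem Real.sqrt_le_half_one_add {x : ℝ} (hx : 0 ≤ x) : √x ≤ 2⁻¹ * (1 + x) := by
  nlinarith [Real.sq_sqrt hx, sq_nonneg (√x - 1)]

theorem Real.sqrt_eq_half_one_add_iff {x : ℝ} (hx : 0 ≤ x) : √x = 2⁻¹ * (1 + x) ↔ x = 1 := by
  refine ⟨fun h => ?_, fun h => by norm_num [h]⟩
  nlinarith [Real.sq_sqrt hx, sq_nonneg (√x - 1)]

theorem IsUnit.exists_eq_star_mul_mul {R : Type*} [Monoid R] [StarMul R] {B : R} (hB : IsUnit B)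
    (L : R) : ∃ M, L = star B * M * B := by
  lift B to Rˣ using hB
  refine ⟨star (B⁻¹ : Rˣ).val * L * (B⁻¹ : Rˣ).val, ?_⟩
  rw [← mul_assoc, ← mul_assoc, ← star_mul, Units.inv_mul, star_one, one_mul, mul_assoc,
    Units.inv_mul, mul_one]

theorem Matrix.det_star_mul_mul {n R : Type*} [Fintype n] [DecidableEq n] [CommRing R]
    [StarRing R] [TrivialStar R] (A B : Matrix n n R) :
    (star B * A * B).det = B.det ^ 2 * A.det := by
  rw [det_mul, det_mul, star_eq_conjTranspose, det_conjTranspose, star_trivial]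
  ring

section Hermitian

variable {𝕜 n : Type*} [RCLike 𝕜] [Fintype n] [DecidableEq n] {A : Matrix n n 𝕜}

theorem Matrix.IsHermitian.det_cfc (hA : A.IsHermitian) (f : ℝ → ℝ) :
    (cfc f A).det = ∏ i, (f (hA.eigenvalues i) : 𝕜) := by
  rw [hA.cfc_eq]
  simp [IsHermitian.cfc, -Unitary.conjStarAlgAut_apply]

theorem Matrix.IsHermitian.eq_one_of_forall_eigenvalues_eq_one (hA : A.IsHermitian)
    (h : ∀ i, hA.eigenvalues i = 1) : A = 1 :=
  calc A = cfc (fun x : ℝ => x) A := (cfc_id' ℝ A).symm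
    _ = cfc (fun _ : ℝ => 1) A := cfc_congr <| by
        rw [hA.spectrum_real_eq_range_eigenvalues]
        rintro - ⟨i, rfl⟩
        exact h i
    _ = 1 := cfc_const_one ℝ A

open scoped MatrixOrder ComplexOrder in
theorem Matrix.PosDef.exists_isUnit_eq_star_mul_self (hA : A.PosDef) :
    ∃ B, IsUnit B ∧ A = star B * B :=
  CStarAlgebra.isStrictlyPositive_iff_eq_star_mul_self.mp hA.isStrictlyPositive

end Hermitian

section Real

variable {n : Type*} [Fintype n] [DecidableEq n]

theorem Matrix.sqrt_det_star_mul_mul (A B : Matrix n n ℝ) :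
    √(star B * A * B).det = |B.det| * √A.det := by
  rw [det_star_mul_mul, Real.sqrt_mul (sq_nonneg _), Real.sqrt_sq_eq_abs]

theorem Matrix.PosDef.det_half_one_add_eq_sqrt_det_iff {M : Matrix n n ℝ} (hM : M.PosDef) :
    ((2⁻¹ : ℝ) • (1 + M)).det = √M.det ↔ M = 1 := by
  refine ⟨fun h => hM.1.eq_one_of_forall_eigenvalues_eq_one fun i => ?_, fun h => ?_⟩
  · have hpos := hM.eigenvalues_pos
    have hcfc : cfc (fun x : ℝ => 2⁻¹ * (1 + x)) M = (2⁻¹ : ℝ) • (1 + M) := by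
      rw [cfc_const_mul (2⁻¹ : ℝ) (fun x => 1 + x) M, cfc_add M (fun _ => 1) (fun x => x),
        cfc_const_one ℝ M hM.1.isSelfAdjoint, cfc_id' ℝ M hM.1.isSelfAdjoint]
    rw [← hcfc, hM.1.det_cfc, hM.1.det_eq_prod_eigenvalues] at h
    simp only [RCLike.ofReal_real_eq_id, id] at h
    rw [Real.sqrt_prod _ fun i _ => (hpos i).le, eq_comm,
      Finset.prod_eq_prod_iff_of_le_of_pos (fun i _ => Real.sqrt_pos.2 (hpos i))
        (fun i _ => Real.sqrt_le_half_one_add (hpos i).le)] at h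
    exact (Real.sqrt_eq_half_one_add_iff (hpos i).le).mp (h i (Finset.mem_univ i))
  · rw [h, ← two_smul ℝ, smul_smul, inv_mul_cancel₀ two_ne_zero, one_smul, det_one,
      Real.sqrt_one]

theorem Matrix.PosDef.det_half_add_eq_sqrt_det_mul_sqrt_det_iff {K L : Matrix n n ℝ}
    (hK : K.PosDef) (hL : L.PosDef) :
    ((2⁻¹ : ℝ) • (K + L)).det = √K.det * √L.det ↔ K = L := by
  obtain ⟨B, hB, rfl⟩ := hK.exists_isUnit_eq_star_mul_self
  obtain ⟨M, rfl⟩ := hB.exists_eq_star_mul_mul L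
  have hM : M.PosDef := (IsUnit.posDef_star_left_conjugate_iff hB).mp hL
  have hdetB : B.det ^ 2 ≠ 0 := pow_ne_zero 2 (isUnit_iff_isUnit_det B |>.mp hB).ne_zero
  have hone : star B * B = star B * 1 * B := by rw [mul_one]
  have hsum : (2⁻¹ : ℝ) • (star B * 1 * B + star B * M * B) =
      star B * ((2⁻¹ : ℝ) • (1 + M)) * B := by
    simp only [mul_add, add_mul, mul_smul_comm, smul_mul_assoc]
  have hcancel : star B * 1 * B = star B * M * B ↔ M = 1 := by
    rw [hB.mul_left_inj, hB.star.mul_right_inj, eq_comm]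
  rw [hone, hsum, det_star_mul_mul, sqrt_det_star_mul_mul, sqrt_det_star_mul_mul, det_one,
    Real.sqrt_one, mul_one, ← mul_assoc, abs_mul_abs_self, ← sq, mul_right_inj' hdetB,
    hM.det_half_one_add_eq_sqrt_det_iff, hcancel]

end Real

theorem bhattacharyya_eq_one_iff {n : ℕ}
    (K L : Matrix (Fin n) (Fin n) ℝ) (hK : K.PosDef) (hL : L.PosDef) :
    bhattacharyya K L = 1 ↔ K = L := by
  have hdet : 0 < ((K + L) / 2).det := by
    rw [div_two_eq_smul]
    exact ((hK.add hL).smul (by norm_num : (0 : ℝ) < 2⁻¹)).det_pos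
  rw [bhattacharyya, mul_inv_eq_one₀ hdet.ne', eq_comm, div_two_eq_smul]
  exact hK.det_half_add_eq_sqrt_det_mul_sqrt_det_iff hL
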